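/- arXiv:1204.6470 — 2 statements merged into one kernel-verified Lean document; each statement's English description precedes it below -/
import Mathlib

section
/- Let a ≥ 0 and let A, K ≥ 0 be real numbers such that A·a^n ≤ K·n!·e^n for every natural number n (including n = 0). Then A ≤ K·e·e^{−a/e²}. -/
set_option autoImplicit false in
theorem stmt_8 (a A K : ℝ) (ha : 0 ≤ a) (hA : 0 ≤ A) (hK : 0 ≤ K)
    (h : ∀ n : ℕ, A * a ^ n ≤ K * (Nat.factorial n : ℝ) * Real.exp 1 ^ n) :
    A ≤ K * Real.exp 1 * Real.exp (-a / Real.exp 1 ^ 2) := by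
  set e := Real.exp 1 with he
  have hepos : 0 < e := Real.exp_pos 1
  set t := a / e ^ 2 with ht
  have ht0 : 0 ≤ t := div_nonneg ha (by positivity)
  set n := ⌊t⌋₊ with hn
  have hnt : (n : ℝ) ≤ t := Nat.floor_le ht0
  have htn : t < n + 1 := Nat.lt_floor_add_one t
  have hapos : 0 < a ^ n := by
    rcases eq_or_lt_of_le ha with h0 | h0
    · have ht' : t = 0 := by rw [ht, ← h0, zero_div]
      simp [hn, ht']
    · positivity
  have hfact : (Nat.factorial n : ℝ) ≤ (n : ℝ) ^ n := by
    exact_mod_cast Nat.factorial_le_pow n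
  have h1 : (n : ℝ) ^ n ≤ t ^ n := pow_le_pow_left₀ (Nat.cast_nonneg n) hnt n
  have h2 : t ^ n * e ^ n = a ^ n * (e ^ n)⁻¹ := by
    rw [ht, div_pow]
    field_simp
    ring
  have key : A * a ^ n ≤ K * a ^ n * (e ^ n)⁻¹ := by
    calc A * a ^ n ≤ K * (Nat.factorial n : ℝ) * e ^ n := h n
      _ ≤ K * t ^ n * e ^ n := by
          gcongr
          exact hfact.trans h1
      _ = K * a ^ n * (e ^ n)⁻¹ := by rw [mul_assoc, h2, mul_assoc]
  have hA' : A ≤ K * (e ^ n)⁻¹ := by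
    have := (div_le_div_iff_of_pos_right hapos).mpr key
    calc A = A * a ^ n / a ^ n := by field_simp
      _ ≤ K * a ^ n * (e ^ n)⁻¹ / a ^ n := this
      _ = K * (e ^ n)⁻¹ := by field_simp
  have hexp : (e ^ n)⁻¹ = Real.exp (-(n : ℝ)) := by
    rw [he, ← Real.exp_nat_mul, Real.exp_neg, mul_one]
  have hle : Real.exp (-(n : ℝ)) ≤ Real.exp (1 - t) := by
    apply Real.exp_le_exp.mpr
    linarith
  calc A ≤ K * (e ^ n)⁻¹ := hA'
    _ = K * Real.exp (-(n : ℝ)) := by rw [hexp]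
    _ ≤ K * Real.exp (1 - t) := by gcongr
    _ = K * e * Real.exp (-a / e ^ 2) := by
        rw [sub_eq_add_neg, Real.exp_add, ht, neg_div, ← mul_assoc, he]
end

section
/- (Gram's inequality.) Let H be a complex inner product space, n a natural number, and u₁,…,u_n, v₁,…,v_n ∈ H. Then |det(⟨u_j, v_k⟩)_{1≤j,k≤n}| ≤ ∏_{j=1}^n ‖u_j‖·‖v_j‖. -/
set_option autoImplicit false

open scoped InnerProductSpace Matrix

section Aux

variable {H : Type*} [NormedAddCommGroup H] [InnerProductSpace ℂ H]

/-- Norm of orthogonal projection is at most the norm. -/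
lemma norm_orthogonalProjection_le' (E : Submodule ℂ H) [CompleteSpace E] (x : H) :
    ‖(Submodule.orthogonalProjection E x : H)‖ ≤ ‖x‖ := by
  have horth : ⟪(Submodule.orthogonalProjection E x : H), x - Submodule.orthogonalProjection E x⟫_ℂ = 0 := by
    have hmem : x - (Submodule.orthogonalProjection E x : H) ∈ Eᗮ :=
      Submodule.sub_starProjection_mem_orthogonal x
    exact (Submodule.mem_orthogonal E _).1 hmem _ (Submodule.orthogonalProjection E x).2
  have h := norm_add_sq (𝕜 := ℂ) (Submodule.orthogonalProjection E x : H)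
      (x - Submodule.orthogonalProjection E x)
  rw [add_sub_cancel, horth] at h
  have h2 : ‖(Submodule.orthogonalProjection E x : H)‖ ^ 2 ≤ ‖x‖ ^ 2 := by
    rw [h]; simp only [map_zero, mul_zero, add_zero]; nlinarith [sq_nonneg ‖x - (Submodule.orthogonalProjection E x : H)‖]
  exact (pow_le_pow_iff_left₀ (norm_nonneg _) (norm_nonneg _) two_ne_zero).1 h2

/-- Norm of the complement of the orthogonal projection is at most the norm. -/
lemma norm_sub_orthogonalProjection_le' (E : Submodule ℂ H) [CompleteSpace E] (x : H) :
    ‖x - (Submodule.orthogonalProjection E x : H)‖ ≤ ‖x‖ := by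
  have horth : ⟪(Submodule.orthogonalProjection E x : H), x - Submodule.orthogonalProjection E x⟫_ℂ = 0 := by
    have hmem : x - (Submodule.orthogonalProjection E x : H) ∈ Eᗮ :=
      Submodule.sub_starProjection_mem_orthogonal x
    exact (Submodule.mem_orthogonal E _).1 hmem _ (Submodule.orthogonalProjection E x).2
  have h := norm_add_sq (𝕜 := ℂ) (Submodule.orthogonalProjection E x : H)
      (x - Submodule.orthogonalProjection E x)
  rw [add_sub_cancel, horth] at h
  have h2 : ‖x - (Submodule.orthogonalProjection E x : H)‖ ^ 2 ≤ ‖x‖ ^ 2 := by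
    rw [h]; simp only [map_zero, mul_zero, add_zero]
    nlinarith [sq_nonneg ‖(Submodule.orthogonalProjection E x : H)‖]
  exact (pow_le_pow_iff_left₀ (norm_nonneg _) (norm_nonneg _) two_ne_zero).1 h2

/-- Hadamard's inequality for Gram determinants. -/
lemma gram_hadamard :
    ∀ (n : ℕ) (u : Fin n → H),
      ‖Matrix.det (Matrix.of fun j k => (inner ℂ (u j) (u k) : ℂ))‖ ≤
        ∏ j : Fin n, ‖u j‖ ^ 2 := by
  intro n
  induction n with
  | zero => intro u; simp [Matrix.det_fin_zero]
  | succ n ih =>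
    intro u
    set M : Matrix (Fin (n + 1)) (Fin (n + 1)) ℂ :=
      Matrix.of fun j k => (inner ℂ (u j) (u k) : ℂ) with hM
    set E : Submodule ℂ H := Submodule.span ℂ (Set.range fun i : Fin n => u i.succ) with hE
    haveI : FiniteDimensional ℂ E := FiniteDimensional.span_of_finite ℂ (Set.finite_range _)
    set p : H := (Submodule.orthogonalProjection E (u 0) : H) with hp
    set w : H := u 0 - p with hwdef
    have hwE : w ∈ Eᗮ := Submodule.sub_starProjection_mem_orthogonal (u 0)
    have hpE : p ∈ E := (Submodule.orthogonalProjection E (u 0)).2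
    have hu0 : u 0 = w + p := by rw [hwdef]; abel
    obtain ⟨c, hc⟩ := (Submodule.mem_span_range_iff_exists_fun ℂ).1 hpE
    have hwinner : ∀ x ∈ E, ⟪x, w⟫_ℂ = 0 := fun x hx =>
      (Submodule.mem_orthogonal E w).1 hwE x hx
    have hwp : ⟪w, p⟫_ℂ = 0 := by
      rw [← inner_conj_symm, hwinner p hpE, map_zero]
    have hwtail : ∀ i : Fin n, ⟪w, u i.succ⟫_ℂ = 0 := by
      intro i
      rw [← inner_conj_symm, hwinner (u i.succ) (Submodule.subset_span ⟨i, rfl⟩), map_zero]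
    set N : Matrix (Fin (n + 1)) (Fin (n + 1)) ℂ :=
      M.updateRow 0 (fun k => (inner ℂ w (u k) : ℂ)) with hN
    have hdet : M.det = N.det := by
      have hrow : M 0 = (fun k => (inner ℂ w (u k) : ℂ)) + (fun k => (inner ℂ p (u k) : ℂ)) := by
        funext k
        simp only [hM, Matrix.of_apply, Pi.add_apply]
        rw [hu0, inner_add_left]
      have h1 : M.det = (M.updateRow 0 (M 0)).det := by rw [Matrix.updateRow_eq_self]
      rw [h1, hrow, Matrix.det_updateRow_add]
      have hzero : (M.updateRow 0 fun k => (inner ℂ p (u k) : ℂ)).det = 0 := by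
        have hrowp : (fun k => (inner ℂ p (u k) : ℂ)) =
            ∑ k : Fin (n + 1),
              (Fin.cases 0 (fun i => (starRingEnd ℂ) (c i)) k : ℂ) • M k := by
          funext k
          simp only [Finset.sum_apply, Pi.smul_apply, smul_eq_mul]
          rw [Fin.sum_univ_succ]
          simp only [Fin.cases_zero, Fin.cases_succ, zero_mul, zero_add]
          rw [← hc, sum_inner]
          congr 1
          funext i
          rw [inner_smul_left]
          rfl
        rw [hrowp, Matrix.det_updateRow_sum]
        simp
      rw [hzero, add_zero, hN]
    have hN00 : N 0 0 = ((‖w‖ : ℂ)) ^ 2 := by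
      rw [hN, Matrix.updateRow_self]
      rw [hu0, inner_add_right, hwp, add_zero, inner_self_eq_norm_sq_to_K]
      norm_cast
    have hN0succ : ∀ i : Fin n, N 0 i.succ = 0 := by
      intro i
      rw [hN, Matrix.updateRow_self]
      exact hwtail i
    have hsub : N.submatrix Fin.succ Fin.succ =
        Matrix.of (fun j k : Fin n => (inner ℂ (u j.succ) (u k.succ) : ℂ)) := by
      funext j k
      simp only [Matrix.submatrix_apply, hN, Matrix.updateRow_ne (Fin.succ_ne_zero j),
        hM, Matrix.of_apply]
    have hdetN : N.det = ((‖w‖ : ℂ)) ^ 2 *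
        (Matrix.of fun j k : Fin n => (inner ℂ (u j.succ) (u k.succ) : ℂ)).det := by
      rw [Matrix.det_succ_row_zero, Fin.sum_univ_succ]
      have hrest : ∀ i : Fin n,
          (-1 : ℂ) ^ ((i.succ : Fin (n + 1)) : ℕ) * N 0 i.succ *
            (N.submatrix Fin.succ (Fin.succAbove i.succ)).det = 0 := by
        intro i
        rw [hN0succ i]
        ring
      rw [Finset.sum_eq_zero (fun i _ => hrest i), add_zero]
      rw [hN00, Fin.succAbove_zero, hsub]
      simp
    have hnorm : ‖w‖ ≤ ‖u 0‖ := by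
      rw [hwdef, hp]
      exact norm_sub_orthogonalProjection_le' E (u 0)
    calc ‖M.det‖ = ‖w‖ ^ 2 * ‖
          (Matrix.of fun j k : Fin n => (inner ℂ (u j.succ) (u k.succ) : ℂ)).det‖ := by
            rw [hdet, hdetN, norm_mul, norm_pow, Complex.norm_real, norm_norm]
      _ ≤ ‖u 0‖ ^ 2 * ∏ j : Fin n, ‖u j.succ‖ ^ 2 := by
            apply mul_le_mul
            · exact pow_le_pow_left₀ (norm_nonneg _) hnorm 2
            · exact ih _
            · exact norm_nonneg _
            · positivity
      _ = ∏ j : Fin (n + 1), ‖u j‖ ^ 2 := by rw [Fin.prod_univ_succ]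

end Aux

theorem stmt_13 {H : Type*} [NormedAddCommGroup H] [InnerProductSpace ℂ H]
    (n : ℕ) (u v : Fin n → H) :
    ‖Matrix.det (Matrix.of fun j k => (inner ℂ (u j) (v k) : ℂ))‖ ≤
      ∏ j : Fin n, ‖u j‖ * ‖v j‖ := by
  by_cases hv : LinearIndependent ℂ v
  · -- linearly independent case : reduce to square matrices over the span of v
    set E : Submodule ℂ H := Submodule.span ℂ (Set.range v) with hE
    haveI : FiniteDimensional ℂ E := FiniteDimensional.span_of_finite ℂ (Set.finite_range _)
    have hrank : Module.finrank ℂ E = n := by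
      rw [hE, finrank_span_eq_card hv, Fintype.card_fin]
    let b : OrthonormalBasis (Fin n) ℂ E :=
      (stdOrthonormalBasis ℂ E).reindex (finCongr hrank)
    set pu : Fin n → E := fun j => Submodule.orthogonalProjection E (u j) with hpu
    set vE : Fin n → E := fun k => ⟨v k, Submodule.subset_span ⟨k, rfl⟩⟩ with hvE
    set A : Matrix (Fin n) (Fin n) ℂ := Matrix.of fun i j => b.repr (pu j) i with hA
    set B : Matrix (Fin n) (Fin n) ℂ := Matrix.of fun i k => b.repr (vE k) i with hB
    have hcol : ∀ (x y : Fin n → E) (j k : Fin n),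
        ((Matrix.of fun i j => b.repr (x j) i)ᴴ * (Matrix.of fun i k => b.repr (y k) i)) j k
          = (inner ℂ ((x j : H)) ((y k : H)) : ℂ) := by
      intro x y j k
      have : (inner ℂ (b.repr (x j)) (b.repr (y k)) : ℂ) = inner ℂ ((x j : H)) ((y k : H)) := by
        rw [b.repr.inner_map_map, Submodule.coe_inner]
      rw [← this, PiLp.inner_apply]
      simp [Matrix.mul_apply, Matrix.conjTranspose_apply, RCLike.inner_apply]
      exact Finset.sum_congr rfl fun _ _ => mul_comm _ _
    -- M = Aᴴ * B
    have hM : (Matrix.of fun j k => (inner ℂ (u j) (v k) : ℂ)) = Aᴴ * B := by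
      funext j k
      rw [hA, hB, hcol pu vE j k]
      have horth : (inner ℂ (u j - (pu j : H)) (v k) : ℂ) = 0 := by
        rw [← inner_conj_symm, (Submodule.mem_orthogonal E _).1
          (show u j - (pu j : H) ∈ Eᗮ from Submodule.sub_starProjection_mem_orthogonal (u j)) (v k)
          (Submodule.subset_span ⟨k, rfl⟩), map_zero]
      rw [inner_sub_left, sub_eq_zero] at horth
      simpa [hvE] using horth
    -- Hadamard bound for A
    have habs : ∀ (x : Fin n → E),
        ‖(Matrix.of fun i j => b.repr (x j) i).det‖ ≤ ∏ j : Fin n, ‖x j‖ := by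
      intro x
      have hG := gram_hadamard n (fun j => (b.repr (x j) : EuclideanSpace ℂ (Fin n)))
      have hGram : (Matrix.of fun j k => (inner ℂ (b.repr (x j)) (b.repr (x k)) : ℂ)) =
          (Matrix.of fun i j => b.repr (x j) i)ᴴ * (Matrix.of fun i j => b.repr (x j) i) := by
        funext j k
        rw [hcol x x j k, Matrix.of_apply, b.repr.inner_map_map, Submodule.coe_inner]
      rw [hGram] at hG
      rw [Matrix.det_mul, Matrix.det_conjTranspose, norm_mul] at hG
      have hstar : ‖star (Matrix.of fun i j => b.repr (x j) i).det‖ =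
          ‖(Matrix.of fun i j => b.repr (x j) i).det‖ := norm_star _
      rw [hstar] at hG
      have hnorm : ∀ j, ‖(b.repr (x j) : EuclideanSpace ℂ (Fin n))‖ = ‖x j‖ :=
        fun j => b.repr.norm_map (x j)
      have hG2 : ‖(Matrix.of fun i j => b.repr (x j) i).det‖ ^ 2 ≤
          (∏ j : Fin n, ‖x j‖) ^ 2 := by
        rw [sq, ← Finset.prod_pow]
        calc ‖(Matrix.of fun i j => b.repr (x j) i).det‖ *
              ‖(Matrix.of fun i j => b.repr (x j) i).det‖ ≤
              ∏ j : Fin n, ‖(b.repr (x j) : EuclideanSpace ℂ (Fin n))‖ ^ 2 := hG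
          _ = ∏ j : Fin n, ‖x j‖ ^ 2 :=
              Finset.prod_congr rfl fun j _ => by rw [hnorm j]
      exact (pow_le_pow_iff_left₀ (norm_nonneg _)
        (Finset.prod_nonneg fun j _ => norm_nonneg _) two_ne_zero).1 hG2
    have hAbound : ‖A.det‖ ≤ ∏ j : Fin n, ‖u j‖ := by
      refine le_trans (habs pu) (Finset.prod_le_prod (fun j _ => norm_nonneg _) fun j _ => ?_)
      calc ‖pu j‖ = ‖((pu j : E) : H)‖ := rfl
        _ ≤ ‖u j‖ := norm_orthogonalProjection_le' E (u j)
    have hBbound : ‖B.det‖ ≤ ∏ j : Fin n, ‖v j‖ := by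
      refine le_trans (habs vE) (le_of_eq (Finset.prod_congr rfl fun j _ => rfl))
    calc ‖(Matrix.of fun j k => (inner ℂ (u j) (v k) : ℂ)).det‖
        = ‖A.det‖ * ‖B.det‖ := by
          have hstar2 : ‖star A.det‖ = ‖A.det‖ := norm_star _
          rw [hM, Matrix.det_mul, Matrix.det_conjTranspose, norm_mul, hstar2]
      _ ≤ (∏ j : Fin n, ‖u j‖) * ∏ j : Fin n, ‖v j‖ :=
          mul_le_mul hAbound hBbound (norm_nonneg _)
            (Finset.prod_nonneg fun j _ => norm_nonneg _)
      _ = ∏ j : Fin n, ‖u j‖ * ‖v j‖ := Finset.prod_mul_distrib.symm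
  · -- linearly dependent case : the determinant vanishes
    obtain ⟨g, hg, i, hgi⟩ := Fintype.not_linearIndependent_iff.1 hv
    have hdet : (Matrix.of fun j k => (inner ℂ (u j) (v k) : ℂ)).det = 0 := by
      rw [← Matrix.exists_mulVec_eq_zero_iff]
      refine ⟨g, fun h0 => hgi (congrFun h0 i), ?_⟩
      funext j
      simp only [Matrix.mulVec, dotProduct, Matrix.of_apply, Pi.zero_apply]
      calc ∑ k, (inner ℂ (u j) (v k) : ℂ) * g k = inner ℂ (u j) (∑ k, g k • v k) := by
            rw [inner_sum]
            exact Finset.sum_congr rfl fun k _ => by rw [inner_smul_right]; ring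
        _ = 0 := by rw [hg, inner_zero_right]
    rw [hdet, norm_zero]
    exact Finset.prod_nonneg fun j _ => mul_nonneg (norm_nonneg _) (norm_nonneg _)
end
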